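/- Let (u,v) be an edge of the maximal matching M. In any execution of the algorithm MaxMatch, if u executes an assignment writing True into end_u in two distinct transitions, then v executes some rule in a transition lying strictly between these two transitions. -/

import Mathlib

open Classical

section MaxMatchPreamble

variable {V : Type*} [Fintype V] [LinearOrder V]

/-- Strict comparison on identifiers where `none` (null) counts as greater
than every identifier. -/
def optLT : Option V → Option V → Prop
  | some x, some y => x < y
  | some _, none => True
  | none, _ => False

/-- A configuration of the MaxMatch algorithm: the variables `p`, `α`, `β`
(`a`,`b` here) and the booleans `s`, `end` (`e` here) of every vertex. -/
structure MMConfig (V : Type*) where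
  p : V → Option V
  a : V → Option V
  b : V → Option V
  s : V → Bool
  e : V → Bool

/-- The local state of one vertex. -/
structure MMLocal (V : Type*) where
  p : Option V
  a : Option V
  b : Option V
  s : Bool
  e : Bool

/-- The local state of vertex `u` in configuration `C`. -/
def MMConfig.loc (C : MMConfig V) (u : V) : MMLocal V :=
  ⟨C.p u, C.a u, C.b u, C.s u, C.e u⟩

/-- `m` encodes a maximal matching of `G`: `m u = some v` iff `(u,v)` is a
matching edge, `m u = none` iff `u` is single. -/
structure MaxMatchingOn (G : SimpleGraph V) (m : V → Option V) : Prop where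
  adj : ∀ u v, m u = some v → G.Adj u v
  symm : ∀ u v, m u = some v → m v = some u
  maximal : ∀ u v, G.Adj u v → m u ≠ none ∨ m v ≠ none

/-- `Lowest(S)`: the minimum-identifier element of `S`, `none` if `S = ∅`. -/
noncomputable def lowestSet (S : Set V) : Option V :=
  if h : (Finset.univ.filter fun x => x ∈ S).Nonempty
  then some ((Finset.univ.filter fun x => x ∈ S).min' h) else none

/-- `Lowest` of a finite set of identifiers-or-null: `none` (null) elements are
greater than all identifiers, hence ignored. -/
noncomputable def lowestOpt (S : Finset (Option V)) : Option V :=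
  lowestSet {x : V | some x ∈ S}

/-- Truth value of a proposition. -/
noncomputable def pb (P : Prop) : Bool := if P then true else false

variable (G : SimpleGraph V) (m : V → Option V)

/-- The candidate set considered by `BestRematch(u)`. -/
def candSet (C : MMConfig V) (u : V) : Set V :=
  {x | G.Adj u x ∧ m x = none ∧ (C.p x = some u ∨ C.e x = false)}

/-- `BestRematch(u)`. -/
noncomputable def bestRematch (C : MMConfig V) (u : V) : Option V × Option V :=
  let a := lowestSet (candSet G m C u)
  (a, a.elim none fun w => lowestSet (candSet G m C u \ {w}))

/-- `AskFirst(u)`. -/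
noncomputable def askFirst (C : MMConfig V) (u : V) : Option V :=
  match m u with
  | none => none
  | some v =>
      if C.a u ≠ none ∧ C.a v ≠ none ∧
         2 ≤ ({C.a u, C.b u, C.a v, C.b v} : Finset (Option V)).card ∧
         (optLT (C.a u) (C.a v) ∨ (C.a u = C.a v ∧ C.b u = none) ∨
          (C.a u = C.a v ∧ C.b v ≠ none ∧ u < v))
      then C.a u else none

/-- `AskSecond(u)`. -/
noncomputable def askSecond (C : MMConfig V) (u : V) : Option V :=
  match m u with
  | none => none
  | some v =>
      if askFirst m C v ≠ none
      then lowestOpt (({C.a u, C.b u} : Finset (Option V)) \ {C.a v})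
      else none

/-- `Ask(u)`. -/
noncomputable def ask (C : MMConfig V) (u : V) : Option V :=
  if askFirst m C u = none then askSecond m C u else askFirst m C u

/-- Guard of rule `ResetEnd` (single vertices). -/
def guardResetEnd (C : MMConfig V) (x : V) : Prop :=
  C.p x = none ∧ C.e x = true

/-- Guard of rule `UpdateP` (single vertices). -/
def guardUpdateP (C : MMConfig V) (x : V) : Prop :=
  (C.p x = none ∧ ∃ w, G.Adj x w ∧ m w ≠ none ∧ C.p w = some x) ∨
  (∃ w, C.p x = some w ∧ ¬ (G.Adj x w ∧ m w ≠ none)) ∨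
  (∃ w, C.p x = some w ∧ C.p w ≠ some x)

/-- Guard of rule `UpdateEnd` (single vertices). -/
def guardUpdateEnd (C : MMConfig V) (x : V) : Prop :=
  ∃ w, C.p x = some w ∧ G.Adj x w ∧ m w ≠ none ∧ C.p w = some x ∧ C.e x ≠ C.e w

/-- `o ∈ single(N(u)) ∪ {null}`. -/
def inSNopt (u : V) (o : Option V) : Prop :=
  o = none ∨ ∃ w, o = some w ∧ G.Adj u w ∧ m w = none

/-- First part (first four disjuncts) of the guard of rule `Update`. -/
def guardUpdateA (C : MMConfig V) (u : V) : Prop :=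
  optLT (C.b u) (C.a u) ∨
  (¬ inSNopt G m u (C.a u) ∨ ¬ inSNopt G m u (C.b u)) ∨
  (C.a u = C.b u ∧ C.a u ≠ none) ∨
  ¬ inSNopt G m u (C.p u)

/-- Guard of rule `Update` (matched vertices). -/
def guardUpdate (C : MMConfig V) (u : V) : Prop :=
  guardUpdateA G m C u ∨
  ((C.a u, C.b u) ≠ bestRematch G m C u ∧
    (C.p u = none ∨ ∃ w, C.p u = some w ∧ C.p w ≠ some u ∧ C.e w = true))

/-- `p_{p_u} = u`. -/
def ppEq (C : MMConfig V) (u : V) : Prop :=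
  ∃ w, C.p u = some w ∧ C.p w = some u

/-- Value assigned to `s_u` by `MatchFirst` (`v = m_u`). -/
def mfS (C : MMConfig V) (u v : V) : Prop :=
  C.p u = askFirst m C u ∧ ppEq C u ∧ (C.p v = askSecond m C v ∨ C.p v = none)

/-- Value assigned to `end_u` by `MatchFirst` (`v = m_u`). -/
def mfE (C : MMConfig V) (u v : V) : Prop :=
  C.p u = askFirst m C u ∧ ppEq C u ∧ C.s u = true ∧
  C.p v = askSecond m C v ∧ C.e v = true

/-- Guard of rule `MatchFirst` (matched vertices). -/
def guardMatchFirst (C : MMConfig V) (u : V) : Prop :=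
  askFirst m C u ≠ none ∧ ∃ v, m u = some v ∧
    (C.p u ≠ askFirst m C u ∨ ¬ (C.s u = true ↔ mfS m C u v) ∨
     ¬ (C.e u = true ↔ mfE m C u v))

/-- Value assigned to `end_u` (and then `s_u`) by `MatchSecond` (`v = m_u`). -/
def msE (C : MMConfig V) (u v : V) : Prop :=
  C.p u = askSecond m C u ∧ ppEq C u ∧ C.p v = askFirst m C v

/-- Guard of rule `MatchSecond` (matched vertices). -/
def guardMatchSecond (C : MMConfig V) (u : V) : Prop :=
  askSecond m C u ≠ none ∧ ∃ v, m u = some v ∧ C.s v = true ∧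
    (C.p u ≠ askSecond m C u ∨ ¬ (C.e u = true ↔ msE m C u v) ∨ C.s u ≠ C.e u)

/-- Guard of rule `ResetMatch` (matched vertices). -/
def guardResetMatch (C : MMConfig V) (u : V) : Prop :=
  (askFirst m C u = none ∧ askSecond m C u = none ∧
    ¬ (C.p u = none ∧ C.s u = false ∧ C.e u = false)) ∨
  (askSecond m C u ≠ none ∧ C.p u ≠ none ∧ ∃ v, m u = some v ∧ C.s v = false)

/-- The local state of `u` after it atomically executes the command of its
highest-priority true-guard rule (its state is unchanged if no guard holds). -/
noncomputable def localNext (C : MMConfig V) (u : V) : MMLocal V :=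
  if m u = none then
    if guardResetEnd C u then ⟨C.p u, C.a u, C.b u, C.s u, false⟩
    else if guardUpdateP G m C u then
      ⟨lowestSet {w | G.Adj u w ∧ C.p w = some u}, C.a u, C.b u, C.s u, false⟩
    else if guardUpdateEnd G m C u then
      ⟨C.p u, C.a u, C.b u, C.s u, (C.p u).elim (C.e u) C.e⟩
    else C.loc u
  else
    if guardUpdate G m C u then
      ⟨none, (bestRematch G m C u).1, (bestRematch G m C u).2, false, false⟩
    else if guardMatchFirst m C u then
      ⟨askFirst m C u, C.a u, C.b u,
        pb (∃ v, m u = some v ∧ mfS m C u v),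
        pb (∃ v, m u = some v ∧ mfE m C u v)⟩
    else if guardMatchSecond m C u then
      ⟨askSecond m C u, C.a u, C.b u,
        pb (∃ v, m u = some v ∧ msE m C u v),
        pb (∃ v, m u = some v ∧ msE m C u v)⟩
    else if guardResetMatch m C u then ⟨none, C.a u, C.b u, false, false⟩
    else C.loc u

/-- `u` is activable (eligible for some rule) in `C`. -/
def Activable (C : MMConfig V) (u : V) : Prop :=
  (m u = none ∧ (guardResetEnd C u ∨ guardUpdateP G m C u ∨ guardUpdateEnd G m C u)) ∨
  (m u ≠ none ∧ (guardUpdate G m C u ∨ guardMatchFirst m C u ∨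
    guardMatchSecond m C u ∨ guardResetMatch m C u))

/-- A configuration is stable when no vertex is activable. -/
def Stable (C : MMConfig V) : Prop := ∀ u, ¬ Activable G m C u

/-- One transition of the adversarial distributed daemon: the nonempty set `A`
of activable vertices simultaneously execute their (highest-priority) rules. -/
def StepOn (C C' : MMConfig V) (A : Set V) : Prop :=
  A.Nonempty ∧ (∀ u ∈ A, Activable G m C u) ∧
  (∀ u ∈ A, C'.loc u = localNext G m C u) ∧
  (∀ u, u ∉ A → C'.loc u = C.loc u)

/-- A (maximal) execution, padded with stuttering once a stable configuration is
reached: at each index either a genuine transition occurs, or the configuration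
is stable and nothing moves.  `u ∈ act i` means `u` makes a move in transition
`i ↦ i+1`. -/
structure MMExecution (G : SimpleGraph V) (m : V → Option V) where
  cfg : ℕ → MMConfig V
  act : ℕ → Set V
  valid : ∀ i, StepOn G m (cfg i) (cfg (i+1)) (act i) ∨
    (act i = ∅ ∧ Stable G m (cfg i) ∧ cfg (i+1) = cfg i)

/-- μ: the number of matched vertices. -/
noncomputable def muV : ℕ := (Finset.univ.filter fun u : V => m u ≠ none).card

/-- σ: the number of single vertices. -/
noncomputable def sigmaV : ℕ := (Finset.univ.filter fun u : V => m u = none).card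

/-- The matching `M` as a relation. -/
def Mrel (a b : V) : Prop := m a = some b

/-- The output edge set `M⁺` of a configuration, as a relation. -/
def Mplus (C : MMConfig V) (a b : V) : Prop :=
  (m a = some b ∧ C.p a = none ∧ C.p b = none) ∨
  (G.Adj a b ∧ m a ≠ some b ∧ C.p a = some b ∧ C.p b = some a)

/-- `(x,u,v,y)` is a 3-augmenting path on `(G, M')`. -/
def IsAug3 (M' : V → V → Prop) (x u v y : V) : Prop :=
  x ≠ u ∧ x ≠ v ∧ x ≠ y ∧ u ≠ v ∧ u ≠ y ∧ v ≠ y ∧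
  G.Adj x u ∧ G.Adj u v ∧ G.Adj v y ∧
  M' u v ∧ ¬ M' x u ∧ ¬ M' v y

end MaxMatchPreamble

/-!
Setting `end_u := True` requires `u` and a single neighbour `x = Ask(u)` to point at each other
(`Paired`). While the partner `v` is idle, `α_v` and `β_v` are frozen, so `Ask(u)` stays `x`,
neither `Update` nor `ResetMatch` can fire at `u`, and `u`, `x` keep pointing at each other. At the
second write, `v`'s variables satisfy the condition under which the match rule of `u` sets `end_u`
(`PartnerReady`); as `v` is idle, this condition held since the first write, so `u` was never
activable in between, and in particular not at the second write.
-/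

theorem Nat.le_induction_le {a b : ℕ} {P : ℕ → Prop} (base : P a)
    (succ : ∀ n, a ≤ n → n < b → P n → P (n + 1)) : ∀ n, a ≤ n → n ≤ b → P n := by
  intro n hn
  induction n, hn using Nat.le_induction with
  | base => exact fun _ => base
  | succ n hn ih => exact fun hnb => succ n hn hnb (ih (Nat.le_of_succ_le hnb))

theorem MMConfig.loc_eq_iff {V : Type*} {C : MMConfig V} {w : V} {L : MMLocal V} :
    C.loc w = L ↔ C.p w = L.p ∧ C.a w = L.a ∧ C.b w = L.b ∧ C.s w = L.s ∧ C.e w = L.e := by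
  cases L
  simp [MMConfig.loc]

section

variable {V : Type*} [LinearOrder V] {G : SimpleGraph V} {m : V → Option V} {C D : MMConfig V}
  {u v x : V}

theorem pb_eq_true {P : Prop} : pb P = true ↔ P := by simp [pb]

theorem optLT.asymm {a b : Option V} (h : optLT a b) : ¬ optLT b a := by
  cases a <;> cases b <;> simp_all [optLT, lt_asymm]

theorem optLT.ne {a b : Option V} (h : optLT a b) : a ≠ b := by
  rintro rfl
  cases a <;> simp_all [optLT]

theorem tiebreak_of_askFirst_ne_none (huv : m u = some v) (h : askFirst m C u ≠ none) :
    optLT (C.a u) (C.a v) ∨ (C.a u = C.a v ∧ C.b u = none) ∨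
      (C.a u = C.a v ∧ C.b v ≠ none ∧ u < v) := by
  simp only [askFirst, huv] at h
  split_ifs at h with hc
  · exact hc.2.2.2
  · exact absurd rfl h

theorem askFirst_congr (huv : m u = some v) (hau : C.a u = D.a u) (hbu : C.b u = D.b u)
    (hav : C.a v = D.a v) (hbv : C.b v = D.b v) : askFirst m C u = askFirst m D u := by
  simp only [askFirst, huv, hau, hbu, hav, hbv]

theorem guardUpdateA_congr (ha : C.a u = D.a u) (hb : C.b u = D.b u) (hp : C.p u = D.p u) :
    guardUpdateA G m C u ↔ guardUpdateA G m D u := by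
  simp only [guardUpdateA, ha, hb, hp]

theorem adj_single_of_not_guardUpdateA (h : ¬ guardUpdateA G m C u) (hp : C.p u = some x) :
    G.Adj u x ∧ m x = none := by
  have hx : inSNopt G m u (C.p u) := not_not.mp fun hc => h (Or.inr (Or.inr (Or.inr hc)))
  rcases hx with hnone | ⟨w, hw, hadj, hw'⟩
  · simp [hp] at hnone
  · obtain rfl : x = w := Option.some.inj (hp.symm.trans hw)
    exact ⟨hadj, hw'⟩

end

section

variable {V : Type*} [Fintype V] [LinearOrder V]

theorem lowestSet_mem {S : Set V} {y : V} (h : lowestSet S = some y) : y ∈ S := by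
  unfold lowestSet at h
  split_ifs at h with hne
  cases h
  simpa using Finset.min'_mem _ hne

theorem lowestOpt_mem {S : Finset (Option V)} {y : V} (h : lowestOpt S = some y) : some y ∈ S :=
  lowestSet_mem (S := {x : V | some x ∈ S}) h

variable {G : SimpleGraph V} {m : V → Option V} {C D : MMConfig V} {u v x : V}

theorem askSecond_eq_none_of_askFirst_ne_none (huv : m u = some v) (hvu : m v = some u)
    (h : askFirst m C u ≠ none) : askSecond m C u = none := by
  simp only [askSecond, huv]
  split_ifs with hv
  · by_contra hne
    obtain ⟨y, hy⟩ := Option.ne_none_iff_exists'.mp hne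
    have hy := lowestOpt_mem hy
    simp only [Finset.mem_sdiff, Finset.mem_insert, Finset.mem_singleton] at hy
    have hu := tiebreak_of_askFirst_ne_none huv h
    have hv := tiebreak_of_askFirst_ne_none hvu hv
    -- The tie-breaking clauses of `u` and `v` exclude each other, except when
    -- `α_u = α_v` and `β_u = β_v = null`; then `{α_u, β_u} ∖ {α_v}` holds only null.
    rcases hu with hlt | ⟨heq, hbu⟩ | ⟨heq, hbv, hlt⟩ <;>
      rcases hv with hlt' | ⟨heq', hbv'⟩ | ⟨heq', hbu', hlt'⟩
    all_goals first
      | exact hlt.asymm hlt'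
      | exact hlt.ne heq'.symm
      | exact hlt'.ne heq.symm
      | exact hbu' hbu
      | exact hbv hbv'
      | exact lt_asymm hlt hlt'
      | skip
    rw [hbu] at hy
    obtain ⟨hy | hy, hne⟩ := hy
    · exact hne (hy.trans heq)
    · cases hy
  · rfl

theorem askFirst_eq_none_of_askSecond_ne_none (huv : m u = some v) (hvu : m v = some u)
    (h : askSecond m C u ≠ none) : askFirst m C u = none :=
  not_not.mp (mt (askSecond_eq_none_of_askFirst_ne_none huv hvu) h)

theorem ask_of_askFirst_ne_none (h : askFirst m C u ≠ none) : ask m C u = askFirst m C u :=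
  if_neg h

theorem ask_of_askFirst_eq_none (h : askFirst m C u = none) : ask m C u = askSecond m C u :=
  if_pos h

theorem askSecond_congr (huv : m u = some v) (hvu : m v = some u) (hau : C.a u = D.a u)
    (hbu : C.b u = D.b u) (hav : C.a v = D.a v) (hbv : C.b v = D.b v) :
    askSecond m C u = askSecond m D u := by
  simp only [askSecond, huv, askFirst_congr hvu hav hbv hau hbu, hau, hbu, hav]

theorem ask_congr (huv : m u = some v) (hvu : m v = some u) (hau : C.a u = D.a u)
    (hbu : C.b u = D.b u) (hav : C.a v = D.a v) (hbv : C.b v = D.b v) :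
    ask m C u = ask m D u := by
  simp only [ask, askFirst_congr huv hau hbu hav hbv, askSecond_congr huv hvu hau hbu hav hbv]

variable (G m)

/-- The state in which the match rule of `u` sets `end_u`: `u` and `x = Ask(u)` point at each
other; the last two clauses disable `Update` and `ResetMatch` at `u`. -/
def Paired (C : MMConfig V) (u v x : V) : Prop :=
  C.p u = some x ∧ C.p x = some u ∧ ¬ guardUpdateA G m C u ∧ ask m C u = some x ∧
    (askFirst m C u = none → C.s v = true)

/-- The condition on the partner `v` under which the match rule of `u` sets `end_u`. -/
def PartnerReady (C : MMConfig V) (u v : V) : Prop :=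
  (askFirst m C u ≠ none ∧ C.p v = askSecond m C v ∧ C.e v = true) ∨
    (askFirst m C u = none ∧ C.p v = askFirst m C v ∧ C.s v = true)

variable {G m}

theorem PartnerReady.s_or_e (h : PartnerReady m C u v) : C.s v = true ∨ C.e v = true := by
  rcases h with ⟨-, -, he⟩ | ⟨-, -, hs⟩
  exacts [Or.inr he, Or.inl hs]

theorem partnerReady_congr (huv : m u = some v) (hvu : m v = some u) (hau : C.a u = D.a u)
    (hbu : C.b u = D.b u) (hv : C.loc v = D.loc v) :
    PartnerReady m C u v ↔ PartnerReady m D u v := by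
  have hav : C.a v = D.a v := congrArg MMLocal.a hv
  have hbv : C.b v = D.b v := congrArg MMLocal.b hv
  have hpv : C.p v = D.p v := congrArg MMLocal.p hv
  have hsv : C.s v = D.s v := congrArg MMLocal.s hv
  have hev : C.e v = D.e v := congrArg MMLocal.e hv
  simp only [PartnerReady, askFirst_congr huv hau hbu hav hbv, askFirst_congr hvu hav hbv hau hbu,
    askSecond_congr hvu huv hav hbv hau hbu, hpv, hsv, hev]

theorem Paired.askFirst_or (h : Paired G m C u v x) :
    askFirst m C u = some x ∨ (askFirst m C u = none ∧ askSecond m C u = some x) := by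
  by_cases hF : askFirst m C u = none
  · exact Or.inr ⟨hF, (ask_of_askFirst_eq_none hF).symm.trans h.2.2.2.1⟩
  · exact Or.inl ((ask_of_askFirst_ne_none hF).symm.trans h.2.2.2.1)

theorem Paired.not_guardUpdate (h : Paired G m C u v x) : ¬ guardUpdate G m C u := by
  obtain ⟨hpu, hpx, hA, -⟩ := h
  rintro (hA' | ⟨-, hnone | ⟨w, hw, hwu, -⟩⟩)
  · exact hA hA'
  · simp [hpu] at hnone
  · obtain rfl : x = w := Option.some.inj (hpu.symm.trans hw)
    exact hwu hpx

theorem Paired.not_guardResetMatch (huv : m u = some v) (hvu : m v = some u)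
    (h : Paired G m C u v x) : ¬ guardResetMatch m C u := by
  rintro (⟨hF, hS, -⟩ | ⟨hS, -, w, hw, hsw⟩)
  · have := h.2.2.2.1
    rw [ask_of_askFirst_eq_none hF, hS] at this
    cases this
  · obtain rfl : v = w := Option.some.inj (huv.symm.trans hw)
    simp [h.2.2.2.2 (askFirst_eq_none_of_askSecond_ne_none huv hvu hS)] at hsw

theorem Paired.localNext_p_a_b (huv : m u = some v) (hvu : m v = some u) (h : Paired G m C u v x) :
    (localNext G m C u).p = C.p u ∧ (localNext G m C u).a = C.a u ∧
      (localNext G m C u).b = C.b u := by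
  have hmu : m u ≠ none := by simp [huv]
  unfold localNext
  rw [if_neg hmu, if_neg h.not_guardUpdate]
  split_ifs with hMF hMS hR
  · rcases h.askFirst_or with hF | ⟨hF, -⟩
    · exact ⟨hF.trans h.1.symm, rfl, rfl⟩
    · exact absurd hF hMF.1
  · rcases h.askFirst_or with hF | ⟨-, hS⟩
    · exact absurd (askSecond_eq_none_of_askFirst_ne_none huv hvu (by simp [hF])) hMS.1
    · exact ⟨hS.trans h.1.symm, rfl, rfl⟩
  · exact absurd hR (h.not_guardResetMatch huv hvu)
  · exact ⟨rfl, rfl, rfl⟩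

theorem Paired.not_activable (huv : m u = some v) (hvu : m v = some u) (h : Paired G m C u v x)
    (hs : C.s u = true) (he : C.e u = true) (hr : PartnerReady m C u v) :
    ¬ Activable G m C u := by
  have hppu : ppEq C u := ⟨x, h.1, h.2.1⟩
  rintro (⟨hmu, -⟩ | ⟨-, hU | ⟨hF, w, hw, hMF⟩ | ⟨hS, w, hw, -, hMS⟩ | hR⟩)
  · simp [huv] at hmu
  · exact h.not_guardUpdate hU
  · obtain rfl : v = w := Option.some.inj (huv.symm.trans hw)
    rcases h.askFirst_or with hF' | ⟨hF', -⟩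
    · rcases hr with ⟨-, hpv, hev⟩ | ⟨hF'', -⟩
      · have hpu : C.p u = askFirst m C u := h.1.trans hF'.symm
        have hmfE : mfE m C u v := ⟨hpu, hppu, hs, hpv, hev⟩
        rcases hMF with h1 | h1 | h1
        · exact h1 hpu
        · exact h1 ⟨fun _ => ⟨hpu, hppu, Or.inl hpv⟩, fun _ => hs⟩
        · exact h1 ⟨fun _ => hmfE, fun _ => he⟩
      · exact hF hF''
    · exact hF hF'
  · obtain rfl : v = w := Option.some.inj (huv.symm.trans hw)
    have hF := askFirst_eq_none_of_askSecond_ne_none huv hvu hS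
    have hpu : C.p u = askSecond m C u := h.1.trans (ask_of_askFirst_eq_none hF ▸ h.2.2.2.1).symm
    rcases hr with ⟨hF', -⟩ | ⟨-, hpv, -⟩
    · exact hF' hF
    · rcases hMS with h1 | h1 | h1
      · exact h1 hpu
      · exact h1 ⟨fun _ => ⟨hpu, hppu, hpv⟩, fun _ => he⟩
      · exact h1 (hs.trans he.symm)
  · exact h.not_guardResetMatch huv hvu hR

theorem exists_paired_of_localNext_e (huv : m u = some v) (hvu : m v = some u)
    (hA : Activable G m C u) (he : (localNext G m C u).e = true) :
    ∃ x, Paired G m C u v x ∧ PartnerReady m C u v ∧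
      localNext G m C u = ⟨some x, C.a u, C.b u, true, true⟩ := by
  have hmu : m u ≠ none := by simp [huv]
  have hU : ¬ guardUpdate G m C u := fun hU => by simp [localNext, hmu, hU] at he
  have hUA : ¬ guardUpdateA G m C u := fun h => hU (Or.inl h)
  unfold localNext at he ⊢
  rw [if_neg hmu, if_neg hU] at he ⊢
  split_ifs at he ⊢ with hMF hMS hR
  · have he : pb (∃ w, m u = some w ∧ mfE m C u w) = true := he
    obtain ⟨w, hw, hpu, ⟨x, hpx, hxp⟩, hs, hpv, hev⟩ := pb_eq_true.mp he
    obtain rfl : v = w := Option.some.inj (huv.symm.trans hw)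
    have hF : askFirst m C u = some x := hpu.symm.trans hpx
    have hFne : askFirst m C u ≠ none := by simp [hF]
    refine ⟨x, ⟨hpx, hxp, hUA, (ask_of_askFirst_ne_none hFne).trans hF, fun h => absurd h hFne⟩,
      Or.inl ⟨hFne, hpv, hev⟩, ?_⟩
    rw [hF, pb_eq_true.mpr ⟨v, huv, hpu, ⟨x, hpx, hxp⟩, Or.inl hpv⟩, he]
  · have he : pb (∃ w, m u = some w ∧ msE m C u w) = true := he
    obtain ⟨w, hw, hpu, ⟨x, hpx, hxp⟩, hpv⟩ := pb_eq_true.mp he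
    obtain rfl : v = w := Option.some.inj (huv.symm.trans hw)
    obtain ⟨-, w, hw, hsv, -⟩ := hMS
    obtain rfl : v = w := Option.some.inj (huv.symm.trans hw)
    have hS : askSecond m C u = some x := hpu.symm.trans hpx
    have hF := askFirst_eq_none_of_askSecond_ne_none (C := C) huv hvu (by simp [hS])
    refine ⟨x, ⟨hpx, hxp, hUA, (ask_of_askFirst_eq_none hF).trans hS, fun _ => hsv⟩,
      Or.inr ⟨hF, hpv, hsv⟩, ?_⟩
    rw [hS, he]
  · rcases hA with ⟨h, -⟩ | ⟨-, h | h | h | h⟩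
    exacts [absurd h hmu, absurd h hU, absurd h hMF, absurd h hMS, absurd h hR]

theorem localNext_a_b_of_s (hmu : m u ≠ none) (hs : (localNext G m C u).s = true) :
    (localNext G m C u).a = C.a u ∧ (localNext G m C u).b = C.b u := by
  unfold localNext at hs ⊢
  rw [if_neg hmu] at hs ⊢
  split_ifs at hs ⊢ <;> exact ⟨rfl, rfl⟩

theorem localNext_p_of_single_of_mutual (hx : m x = none) (hpx : C.p x = some u)
    (hpu : C.p u = some x) (hadj : G.Adj x u) (hmu : m u ≠ none) :
    (localNext G m C x).p = C.p x := by
  have hRE : ¬ guardResetEnd C x := fun ⟨h, _⟩ => by simp [hpx] at h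
  have hUP : ¬ guardUpdateP G m C x := by
    rintro (⟨h, -⟩ | ⟨w, hw, hnot⟩ | ⟨w, hw, hne⟩)
    · simp [hpx] at h
    · obtain rfl : u = w := Option.some.inj (hpx.symm.trans hw)
      exact hnot ⟨hadj, hmu⟩
    · obtain rfl : u = w := Option.some.inj (hpx.symm.trans hw)
      exact hne hpu
  unfold localNext
  rw [if_pos hx, if_neg hRE, if_neg hUP]
  split_ifs <;> rfl

end

namespace MMExecution

variable {V : Type*} [Fintype V] [LinearOrder V] {G : SimpleGraph V} {m : V → Option V}
  (E : MMExecution G m) {u v x : V} {k : ℕ}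

theorem loc_succ_of_mem {w : V} (h : w ∈ E.act k) :
    (E.cfg (k + 1)).loc w = localNext G m (E.cfg k) w ∧ Activable G m (E.cfg k) w := by
  rcases E.valid k with ⟨-, hact, hnext, -⟩ | ⟨hemp, -, -⟩
  · exact ⟨hnext w h, hact w h⟩
  · simp [hemp] at h

theorem loc_succ_of_not_mem {w : V} (h : w ∉ E.act k) :
    (E.cfg (k + 1)).loc w = (E.cfg k).loc w := by
  rcases E.valid k with ⟨-, -, -, hkeep⟩ | ⟨-, -, heq⟩
  · exact hkeep w h
  · rw [heq]

theorem loc_eq_of_idle {w : V} {a b : ℕ} (hidle : ∀ k, a ≤ k → k < b → w ∉ E.act k) :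
    ∀ n, a ≤ n → n ≤ b → (E.cfg n).loc w = (E.cfg a).loc w :=
  Nat.le_induction_le rfl fun n han hnb ih => (E.loc_succ_of_not_mem (hidle n han hnb)).trans ih

theorem exists_paired_of_end_write (huv : m u = some v) (hvu : m v = some u)
    (hk : u ∈ E.act k) (he : (E.cfg (k + 1)).e u = true) :
    ∃ x, Paired G m (E.cfg k) u v x ∧ PartnerReady m (E.cfg k) u v ∧
      Activable G m (E.cfg k) u ∧
      (E.cfg (k + 1)).loc u = ⟨some x, (E.cfg k).a u, (E.cfg k).b u, true, true⟩ := by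
  obtain ⟨hloc, hA⟩ := E.loc_succ_of_mem hk
  obtain ⟨x, hP, hr, hL⟩ := exists_paired_of_localNext_e huv hvu hA
    ((MMConfig.loc_eq_iff.mp hloc).2.2.2.2.symm.trans he)
  exact ⟨x, hP, hr, hA, hloc.trans hL⟩

theorem partner_step (huv : m u = some v) (hvu : m v = some u)
    (h : (E.cfg (k + 1)).s v = true ∨ (E.cfg (k + 1)).e v = true) :
    (E.cfg (k + 1)).a v = (E.cfg k).a v ∧ (E.cfg (k + 1)).b v = (E.cfg k).b v ∧
      ((E.cfg k).s v = true → (E.cfg (k + 1)).s v = true) := by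
  by_cases hk : v ∈ E.act k
  · obtain ⟨hloc, hA⟩ := E.loc_succ_of_mem hk
    obtain ⟨-, ha, hb, hs, he⟩ := MMConfig.loc_eq_iff.mp hloc
    rw [hs, he] at h
    rw [ha, hb, hs]
    rcases h with h | h
    · exact ⟨(localNext_a_b_of_s (by simp [hvu]) h).1, (localNext_a_b_of_s (by simp [hvu]) h).2,
        fun _ => h⟩
    · obtain ⟨_, -, -, hL⟩ := exists_paired_of_localNext_e hvu huv hA h
      rw [hL]
      exact ⟨rfl, rfl, fun _ => rfl⟩
  · obtain ⟨-, ha, hb, hs, -⟩ := MMConfig.loc_eq_iff.mp (E.loc_succ_of_not_mem hk)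
    exact ⟨ha, hb, fun h => hs.trans h⟩

theorem paired_succ (huv : m u = some v) (hvu : m v = some u)
    (hva : (E.cfg (k + 1)).a v = (E.cfg k).a v) (hvb : (E.cfg (k + 1)).b v = (E.cfg k).b v)
    (hvs : (E.cfg k).s v = true → (E.cfg (k + 1)).s v = true)
    (h : Paired G m (E.cfg k) u v x) :
    Paired G m (E.cfg (k + 1)) u v x ∧
      (E.cfg (k + 1)).a u = (E.cfg k).a u ∧ (E.cfg (k + 1)).b u = (E.cfg k).b u := by
  have ⟨hpu, hpx, hUA, hask, hsv⟩ := h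
  have hu : (E.cfg (k + 1)).p u = (E.cfg k).p u ∧ (E.cfg (k + 1)).a u = (E.cfg k).a u ∧
      (E.cfg (k + 1)).b u = (E.cfg k).b u := by
    by_cases hk : u ∈ E.act k
    · obtain ⟨hp, ha, hb, -⟩ := MMConfig.loc_eq_iff.mp (E.loc_succ_of_mem hk).1
      rw [hp, ha, hb]
      exact h.localNext_p_a_b huv hvu
    · obtain ⟨hp, ha, hb, -⟩ := MMConfig.loc_eq_iff.mp (E.loc_succ_of_not_mem hk)
      exact ⟨hp, ha, hb⟩
  have hx : (E.cfg (k + 1)).p x = (E.cfg k).p x := by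
    obtain ⟨hadj, hxs⟩ := adj_single_of_not_guardUpdateA hUA hpu
    by_cases hk : x ∈ E.act k
    · rw [(MMConfig.loc_eq_iff.mp (E.loc_succ_of_mem hk).1).1]
      exact localNext_p_of_single_of_mutual hxs hpx hpu hadj.symm (by simp [huv])
    · exact congrArg MMLocal.p (E.loc_succ_of_not_mem hk)
  obtain ⟨hpu', hau, hbu⟩ := hu
  refine ⟨⟨hpu'.trans hpu, hx.trans hpx, ?_, ?_, ?_⟩, hau, hbu⟩
  · rwa [guardUpdateA_congr hau hbu hpu']
  · rwa [ask_congr huv hvu hau hbu hva hvb]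
  · rw [askFirst_congr huv hau hbu hva hvb]
    exact fun hF => hvs (hsv hF)

theorem paired_of_idle (huv : m u = some v) (hvu : m v = some u) {a b : ℕ}
    (hidle : ∀ k, a ≤ k → k < b → v ∉ E.act k) (h : Paired G m (E.cfg a) u v x) :
    ∀ n, a ≤ n → n ≤ b → Paired G m (E.cfg n) u v x ∧
      (E.cfg n).a u = (E.cfg a).a u ∧ (E.cfg n).b u = (E.cfg a).b u :=
  Nat.le_induction_le ⟨h, rfl, rfl⟩ fun n han hnb ⟨hP, ha, hb⟩ => by
    obtain ⟨-, hva, hvb, hvs, -⟩ := MMConfig.loc_eq_iff.mp (E.loc_succ_of_not_mem (hidle n han hnb))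
    obtain ⟨hP', ha', hb'⟩ := E.paired_succ huv hvu hva hvb (fun h => hvs.trans h) hP
    exact ⟨hP', ha'.trans ha, hb'.trans hb⟩

theorem not_activable_of_idle (huv : m u = some v) (hvu : m v = some u) {a b : ℕ} (hab : a ≤ b)
    (hidle : ∀ k, a ≤ k → k < b → v ∉ E.act k) (h : Paired G m (E.cfg a) u v x)
    (hs : (E.cfg a).s u = true) (he : (E.cfg a).e u = true)
    (hr : PartnerReady m (E.cfg b) u v) : ¬ Activable G m (E.cfg b) u := by
  have hP := E.paired_of_idle huv hvu hidle h
  have hready : ∀ n, a ≤ n → n ≤ b → PartnerReady m (E.cfg n) u v := fun n han hnb => by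
    obtain ⟨-, ha, hb⟩ := hP n han hnb
    obtain ⟨-, ha', hb'⟩ := hP b hab le_rfl
    refine (partnerReady_congr huv hvu (ha.trans ha'.symm) (hb.trans hb'.symm) ?_).mpr hr
    exact (E.loc_eq_of_idle hidle n han hnb).trans (E.loc_eq_of_idle hidle b hab le_rfl).symm
  have hse : ∀ n, a ≤ n → n ≤ b → (E.cfg n).s u = true ∧ (E.cfg n).e u = true :=
    Nat.le_induction_le ⟨hs, he⟩ fun n han hnb ⟨hs, he⟩ => by
      have hu : u ∉ E.act n := fun hu => (hP n han hnb.le).1.not_activable huv hvu hs he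
        (hready n han hnb.le) (E.loc_succ_of_mem hu).2
      obtain ⟨-, -, -, hs', he'⟩ := MMConfig.loc_eq_iff.mp (E.loc_succ_of_not_mem hu)
      exact ⟨hs'.trans hs, he'.trans he⟩
  obtain ⟨hs, he⟩ := hse b hab le_rfl
  exact (hP b hab le_rfl).1.not_activable huv hvu hs he hr

end MMExecution

/-- If a matched vertex `u` writes `True` into `end_u` in two distinct
transitions, then its partner `v` executes a rule strictly in between. -/
theorem stmt18 {V : Type*} [Fintype V] [LinearOrder V]
    (G : SimpleGraph V) (m : V → Option V) (hm : MaxMatchingOn G m)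
    (E : MMExecution G m) (u v : V) (huv : m u = some v) (i j : ℕ) (hij : i < j)
    (hi : u ∈ E.act i ∧ (E.cfg (i + 1)).e u = true)
    (hj : u ∈ E.act j ∧ (E.cfg (j + 1)).e u = true) :
    ∃ k, i < k ∧ k < j ∧ v ∈ E.act k := by
  by_contra hidle
  push Not at hidle
  have hvu := hm.symm u v huv
  obtain ⟨x, hPi, -, -, hloc⟩ := E.exists_paired_of_end_write huv hvu hi.1 hi.2
  obtain ⟨-, -, hrj, hAj, -⟩ := E.exists_paired_of_end_write huv hvu hj.1 hj.2
  have hv : (E.cfg j).loc v = (E.cfg (i + 1)).loc v := E.loc_eq_of_idle hidle j hij le_rfl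
  -- `v` may move in transition `i`, but not by `Update`, which would reset `s_v` and `end_v`.
  have hse : (E.cfg (i + 1)).s v = true ∨ (E.cfg (i + 1)).e v = true := by
    obtain ⟨-, -, -, hs, he⟩ := MMConfig.loc_eq_iff.mp hv
    have h := hrj.s_or_e
    rwa [hs, he] at h
  obtain ⟨hva, hvb, hvs⟩ := E.partner_step huv hvu hse
  obtain ⟨hP, -, -⟩ := E.paired_succ huv hvu hva hvb hvs hPi
  obtain ⟨-, -, -, hs, he⟩ := MMConfig.loc_eq_iff.mp hloc
  exact E.not_activable_of_idle huv hvu hij hidle hP hs he hrj hAj
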